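/- Fix a real γ > 2. Then lim_{N→∞} d̂_N(γ) / N^{1/(γ−1)} = ((γ−1)·ζ(γ))^{−1/(γ−1)}, where ζ is the Riemann zeta function; in particular lim_{N→∞} d̂_N(γ)/N = 0, i.e., the expected maximum degree grows sublinearly in N. -/

import Mathlib

open Filter

/-- The generalized harmonic number `H_{a,b} = ∑_{t=1}^{a} t^{-b}`. -/
noncomputable def Hgen (a : ℕ) (b : ℝ) : ℝ := ∑ t ∈ Finset.Icc 1 a, (t : ℝ) ^ (-b)

/-- The expected maximum degree of a power-law degree sequence with exponent `γ` on
`N` nodes: `d̂_N(γ) = max { x ∈ {1,…,N-1} : N · ∑_{k=x}^{N-1} k^{-γ} ≥ H_{N-1,γ} }`. -/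
noncomputable def dhat (N : ℕ) (γ : ℝ) : ℕ :=
  sSup {x : ℕ | 1 ≤ x ∧ x ≤ N - 1 ∧
    Hgen (N - 1) γ ≤ (N : ℝ) * ∑ k ∈ Finset.Icc x (N - 1), (k : ℝ) ^ (-γ)}

/-!
By comparison with `∫ t ^ (-γ)`, the tail `∑_{k=x}^{N-1} k^{-γ}` lies between
`(x^{1-γ} - N^{1-γ}) / (γ - 1)` and `(x - 1)^{1-γ} / (γ - 1)`, while `H_{N-1,γ}` increases to
`ζ(γ)`. Solving the defining inequality `N · tail(x) ≥ H_{N-1,γ}` for `x` with these bounds puts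
`d̂_N(γ)` between `(((γ - 1) ζ(γ) + N^{2-γ}) / N)^{-1/(γ-1)} - 1` and
`((γ - 1) H_{N-1,γ} / N)^{-1/(γ-1)} + 1`. Both are
`((γ - 1) ζ(γ))^{-1/(γ-1)} N^{1/(γ-1)} (1 + o(1))` since `N^{2-γ} → 0` for `γ > 2`, and
`1/(γ-1) < 1` then gives sublinearity.
-/

open Topology Finset

lemma riemannZeta_ofReal_re_eq_tsum {γ : ℝ} (hγ : 1 < γ) :
    (riemannZeta γ).re = ∑' n : ℕ, (n : ℝ) ^ (-γ) := by
  have hterm (n : ℕ) : 1 / (n : ℂ) ^ (γ : ℂ) = (((n : ℝ) ^ (-γ) : ℝ) : ℂ) := by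
    rw [Real.rpow_neg n.cast_nonneg, Complex.ofReal_inv, Complex.ofReal_cpow n.cast_nonneg,
      one_div]
    norm_cast
  rw [zeta_eq_tsum_one_div_nat_cpow (by simpa using hγ), tsum_congr hterm, ← Complex.ofReal_tsum,
    Complex.ofReal_re]

section IntegralComparison

variable {γ : ℝ}

lemma integral_rpow_neg_of_one_lt (hγ : 1 < γ) {a b : ℝ} (ha : 0 < a) (hab : a ≤ b) :
    ∫ t in a..b, t ^ (-γ) = (a ^ (1 - γ) - b ^ (1 - γ)) / (γ - 1) := by
  have h0 : (0 : ℝ) ∉ Set.uIcc a b := by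
    rw [Set.uIcc_of_le hab]
    exact fun h => (h.1.trans_lt ha).false
  rw [integral_rpow (Or.inr ⟨by linarith, h0⟩), show -γ + 1 = 1 - γ by ring, ← neg_sub γ 1,
    div_neg, ← neg_div, neg_sub]

lemma antitoneOn_rpow_neg_Icc (hγ : 0 ≤ γ) {a b : ℝ} (ha : 0 < a) :
    AntitoneOn (fun t : ℝ => t ^ (-γ)) (Set.Icc a b) :=
  (Real.antitoneOn_rpow_Ioi_of_exponent_nonpos (by linarith)).mono
    fun _ ht => ha.trans_le ht.1

lemma div_sub_le_sum_Ico_rpow_neg (hγ : 1 < γ) {x n : ℕ} (hx : 1 ≤ x) (hxn : x ≤ n) :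
    ((x : ℝ) ^ (1 - γ) - (n : ℝ) ^ (1 - γ)) / (γ - 1) ≤
      ∑ k ∈ Ico x n, (k : ℝ) ^ (-γ) := by
  have hx0 : (0 : ℝ) < x := by exact_mod_cast hx
  rw [← integral_rpow_neg_of_one_lt hγ hx0 (by exact_mod_cast hxn)]
  exact (antitoneOn_rpow_neg_Icc (by linarith) hx0).integral_le_sum_Ico hxn

lemma sum_Icc_rpow_neg_le_div (hγ : 1 < γ) {a n : ℕ} (ha : 1 ≤ a) (han : a ≤ n) :
    ∑ k ∈ Icc (a + 1) n, (k : ℝ) ^ (-γ) ≤ (a : ℝ) ^ (1 - γ) / (γ - 1) := by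
  have ha0 : (0 : ℝ) < a := by exact_mod_cast ha
  have hsum := (antitoneOn_rpow_neg_Icc (b := n) (by linarith) ha0).sum_le_integral_Ico han
  rw [integral_rpow_neg_of_one_lt hγ ha0 (by exact_mod_cast han)] at hsum
  rw [← Ico_add_one_right_eq_Icc, ← sum_Ico_add' (fun k : ℕ => (k : ℝ) ^ (-γ))]
  calc _ ≤ _ := hsum
    _ ≤ _ := by gcongr; exact sub_le_self _ (by positivity)

end IntegralComparison

section Hgen

variable {γ : ℝ}

lemma Hgen_eq_sum_range (hγ : γ ≠ 0) (M : ℕ) :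
    Hgen M γ = ∑ t ∈ range (M + 1), (t : ℝ) ^ (-γ) := by
  rw [range_eq_Ico, Ico_add_one_right_eq_Icc, ← insert_Icc_add_one_left_eq_Icc M.zero_le,
    sum_insert (by simp), Nat.cast_zero, Real.zero_rpow (neg_ne_zero.2 hγ), zero_add, zero_add,
    Hgen]

lemma Hgen_nonneg (M : ℕ) (γ : ℝ) : 0 ≤ Hgen M γ :=
  sum_nonneg fun t _ => Real.rpow_nonneg t.cast_nonneg _

lemma Hgen_pos {M : ℕ} (hM : 1 ≤ M) (γ : ℝ) : 0 < Hgen M γ :=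
  sum_pos (fun t ht => Real.rpow_pos_of_pos (by exact_mod_cast (mem_Icc.1 ht).1) _)
    (nonempty_Icc.2 hM)

lemma Hgen_le_tsum (hγ : 1 < γ) (M : ℕ) : Hgen M γ ≤ ∑' n : ℕ, (n : ℝ) ^ (-γ) := by
  rw [Hgen_eq_sum_range (by linarith)]
  exact (Real.summable_nat_rpow.2 (by linarith)).sum_le_tsum _
    fun n _ => Real.rpow_nonneg n.cast_nonneg _

lemma tendsto_Hgen_sub_one (hγ : 1 < γ) :
    Tendsto (fun N : ℕ => Hgen (N - 1) γ) atTop (𝓝 (∑' n : ℕ, (n : ℝ) ^ (-γ))) := by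
  have hsum := (Real.summable_nat_rpow.2 (by linarith : -γ < -1)).hasSum.tendsto_sum_nat
  simp_rw [Hgen_eq_sum_range (by linarith : γ ≠ 0)]
  exact (hsum.comp (tendsto_add_atTop_nat 1)).comp (tendsto_sub_atTop_nat 1)

end Hgen

section dhat

variable {γ : ℝ} {N : ℕ}

lemma le_dhat_of_le_sum {x : ℕ} (hx : 1 ≤ x) (hxN : x ≤ N - 1)
    (hsum : Hgen (N - 1) γ ≤ (N : ℝ) * ∑ k ∈ Icc x (N - 1), (k : ℝ) ^ (-γ)) :
    x ≤ dhat N γ :=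
  le_csSup ⟨N - 1, fun _ hy => hy.2.1⟩ ⟨hx, hxN, hsum⟩

lemma dhat_spec (hN : 2 ≤ N) :
    1 ≤ dhat N γ ∧ dhat N γ ≤ N - 1 ∧
      Hgen (N - 1) γ ≤ (N : ℝ) * ∑ k ∈ Icc (dhat N γ) (N - 1), (k : ℝ) ^ (-γ) := by
  have hone : Hgen (N - 1) γ ≤ (N : ℝ) * ∑ k ∈ Icc 1 (N - 1), (k : ℝ) ^ (-γ) :=
    le_mul_of_one_le_left (Hgen_nonneg _ _) (by exact_mod_cast (by omega : 1 ≤ N))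
  exact Nat.sSup_mem (s := {x : ℕ | 1 ≤ x ∧ x ≤ N - 1 ∧
    Hgen (N - 1) γ ≤ (N : ℝ) * ∑ k ∈ Icc x (N - 1), (k : ℝ) ^ (-γ)})
    ⟨1, le_rfl, by omega, hone⟩ ⟨N - 1, fun _ hy => hy.2.1⟩

lemma dhat_le (hγ : 1 < γ) (hN : 2 ≤ N) :
    (dhat N γ : ℝ) ≤ ((γ - 1) * Hgen (N - 1) γ / N) ^ (1 - γ)⁻¹ + 1 := by
  obtain ⟨hd1, hdN, hsum⟩ := dhat_spec (γ := γ) hN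
  obtain ⟨a, ha⟩ : ∃ a, dhat N γ = a + 1 := ⟨dhat N γ - 1, by omega⟩
  rw [ha, Nat.cast_add_one, add_le_add_iff_right]
  rcases a.eq_zero_or_pos with rfl | ha1
  · simpa using Real.rpow_nonneg (by positivity [Hgen_nonneg (N - 1) γ]) _
  have hN0 : (0 : ℝ) < N := by positivity
  have htail : Hgen (N - 1) γ ≤ N * ((a : ℝ) ^ (1 - γ) / (γ - 1)) := by
    rw [ha] at hsum
    exact hsum.trans (by gcongr; exact sum_Icc_rpow_neg_le_div hγ ha1 (by omega))
  have hH : 0 < (γ - 1) * Hgen (N - 1) γ :=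
    mul_pos (by linarith) (Hgen_pos (by omega : 1 ≤ N - 1) γ)
  rw [Real.le_rpow_inv_iff_of_neg (by exact_mod_cast ha1) (div_pos hH hN0) (by linarith),
    div_le_iff₀ hN0]
  rw [mul_div_assoc', le_div_iff₀ (by linarith)] at htail
  linarith

lemma le_dhat (hγ : 1 < γ) (hN : 2 ≤ N) {Z : ℝ} (hZ : Hgen (N - 1) γ ≤ Z) :
    (((γ - 1) * Z + (N : ℝ) ^ (2 - γ)) / N) ^ (1 - γ)⁻¹ - 1 ≤ dhat N γ := by
  set w := ((γ - 1) * Z + (N : ℝ) ^ (2 - γ)) / N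
  set x := ⌊w ^ (1 - γ)⁻¹⌋₊
  suffices x ≤ dhat N γ from
    (Nat.sub_one_lt_floor _).le.trans (by exact_mod_cast this)
  rcases x.eq_zero_or_pos with hx0 | hx1
  · simp [hx0]
  have hN0 : (0 : ℝ) < N := by positivity
  have hZ0 : 0 < (γ - 1) * Z :=
    mul_pos (by linarith) ((Hgen_pos (by omega : 1 ≤ N - 1) γ).trans_le hZ)
  have hNN : (N : ℝ) * (N : ℝ) ^ (1 - γ) = (N : ℝ) ^ (2 - γ) := by
    rw [show 2 - γ = 1 + (1 - γ) by ring, Real.rpow_add hN0, Real.rpow_one]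
  have hx0 : (0 : ℝ) < x := by exact_mod_cast hx1
  have hwx : w ≤ (x : ℝ) ^ (1 - γ) :=
    (Real.le_rpow_inv_iff_of_neg hx0 (by positivity) (by linarith)).1
      (Nat.floor_le (by positivity))
  rw [div_le_iff₀ hN0, mul_comm] at hwx
  have hxN : x < N := by
    rw [← Nat.cast_lt (α := ℝ),
      ← Real.rpow_lt_rpow_iff_of_neg hN0 hx0 (by linarith : 1 - γ < 0)]
    nlinarith
  refine le_dhat_of_le_sum hx1 (by omega) (hZ.trans ?_)
  rw [← Ico_add_one_right_eq_Icc, Nat.sub_add_cancel (by omega)]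
  calc Z ≤ N * (((x : ℝ) ^ (1 - γ) - (N : ℝ) ^ (1 - γ)) / (γ - 1)) := by
        rw [mul_div_assoc', le_div_iff₀ (by linarith)]
        linarith
    _ ≤ N * ∑ k ∈ Ico x N, (k : ℝ) ^ (-γ) := by
        gcongr
        exact div_sub_le_sum_Ico_rpow_neg hγ hx1 hxN.le

end dhat

lemma tendsto_natCast_rpow_of_neg {β : ℝ} (hβ : β < 0) :
    Tendsto (fun N : ℕ => (N : ℝ) ^ β) atTop (𝓝 0) := by
  simpa [Function.comp_def] using
    (tendsto_rpow_neg_atTop (neg_pos.2 hβ)).comp tendsto_natCast_atTop_atTop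

lemma tendsto_div_rpow_of_le_of_le {e L : ℝ} (he : e < 0) (hL : 0 < L) {f l u : ℕ → ℝ}
    (hl : Tendsto l atTop (𝓝 L)) (hu : Tendsto u atTop (𝓝 L))
    (hlf : ∀ᶠ N in atTop, (l N / N) ^ e - 1 ≤ f N)
    (hfu : ∀ᶠ N in atTop, f N ≤ (u N / N) ^ e + 1) :
    Tendsto (fun N : ℕ => f N / (N : ℝ) ^ (-e)) atTop (𝓝 (L ^ e)) := by
  have hinv : Tendsto (fun N : ℕ => ((N : ℝ) ^ (-e))⁻¹) atTop (𝓝 0) :=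
    ((tendsto_rpow_atTop (by linarith)).comp tendsto_natCast_atTop_atTop).inv_tendsto_atTop
  have hsplit {v : ℕ → ℝ} (hv : Tendsto v atTop (𝓝 L)) :
      ∀ᶠ N : ℕ in atTop, (v N / N) ^ e / (N : ℝ) ^ (-e) = v N ^ e := by
    filter_upwards [hv.eventually (lt_mem_nhds hL), eventually_gt_atTop 0] with N hvN hN
    have hN' : (0 : ℝ) < N := by exact_mod_cast hN
    rw [Real.div_rpow hvN.le hN'.le, Real.rpow_neg hN'.le, div_inv_eq_mul, div_mul_cancel₀]
    exact (Real.rpow_pos_of_pos hN' e).ne'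
  refine tendsto_of_tendsto_of_tendsto_of_le_of_le'
    (by simpa using (hl.rpow_const (Or.inl hL.ne')).sub hinv)
    (by simpa using (hu.rpow_const (Or.inl hL.ne')).add hinv) ?_ ?_
  · filter_upwards [hlf, hsplit hl] with N hN hsplitN
    calc l N ^ e - ((N : ℝ) ^ (-e))⁻¹ = ((l N / N) ^ e - 1) / (N : ℝ) ^ (-e) := by
          rw [sub_div, hsplitN, one_div]
      _ ≤ f N / (N : ℝ) ^ (-e) := by gcongr
  · filter_upwards [hfu, hsplit hu] with N hN hsplitN
    calc f N / (N : ℝ) ^ (-e) ≤ ((u N / N) ^ e + 1) / (N : ℝ) ^ (-e) := by gcongr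
      _ = u N ^ e + ((N : ℝ) ^ (-e))⁻¹ := by rw [add_div, hsplitN, one_div]

lemma tendsto_div_natCast_of_tendsto_div_rpow {f : ℕ → ℝ} {p c : ℝ} (hp : p < 1)
    (h : Tendsto (fun N : ℕ => f N / (N : ℝ) ^ p) atTop (𝓝 c)) :
    Tendsto (fun N : ℕ => f N / N) atTop (𝓝 0) := by
  have hprod := h.mul (tendsto_natCast_rpow_of_neg (sub_neg.2 hp))
  rw [mul_zero] at hprod
  refine hprod.congr' ?_
  filter_upwards [eventually_gt_atTop 0] with N hN
  have hN' : (0 : ℝ) < N := by exact_mod_cast hN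
  rw [Real.rpow_sub_one hN'.ne']
  field_simp

/-- For `γ > 2`, `lim_{N→∞} d̂_N(γ) / N^{1/(γ-1)} = ((γ-1)·ζ(γ))^{-1/(γ-1)}`,
where `ζ` is the Riemann zeta function; in particular `lim_{N→∞} d̂_N(γ)/N = 0`,
i.e. the expected maximum degree grows sublinearly in `N`. -/
theorem expected_max_degree_sublinear (γ : ℝ) (hγ : 2 < γ) :
    Tendsto (fun N : ℕ => (dhat N γ : ℝ) / (N : ℝ) ^ (1 / (γ - 1))) atTop
      (nhds (((γ - 1) * (riemannZeta γ).re) ^ (-(1 / (γ - 1))))) ∧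
    Tendsto (fun N : ℕ => (dhat N γ : ℝ) / N) atTop (nhds 0) := by
  have hγ1 : 1 < γ := by linarith
  have hexp : -(1 / (γ - 1)) = (1 - γ)⁻¹ := by rw [← neg_sub γ 1, inv_neg, one_div]
  set Z := ∑' n : ℕ, (n : ℝ) ^ (-γ)
  have hZ : 0 < (γ - 1) * Z :=
    mul_pos (by linarith) ((Hgen_pos le_rfl γ).trans_le (Hgen_le_tsum hγ1 1))
  have hlim : Tendsto (fun N : ℕ => (dhat N γ : ℝ) / (N : ℝ) ^ (1 / (γ - 1))) atTop
      (𝓝 (((γ - 1) * Z) ^ (1 - γ)⁻¹)) := by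
    rw [← neg_neg (1 / (γ - 1)), hexp]
    refine tendsto_div_rpow_of_le_of_le (inv_lt_zero.2 (by linarith)) hZ
      (l := fun N => (γ - 1) * Z + (N : ℝ) ^ (2 - γ)) (u := fun N => (γ - 1) * Hgen (N - 1) γ)
      (by simpa using (tendsto_natCast_rpow_of_neg (by linarith)).const_add ((γ - 1) * Z))
      ((tendsto_Hgen_sub_one hγ1).const_mul _) ?_ ?_
    · filter_upwards [eventually_ge_atTop 2] with N hN using le_dhat hγ1 hN (Hgen_le_tsum hγ1 _)
    · filter_upwards [eventually_ge_atTop 2] with N hN using dhat_le hγ1 hN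
  rw [riemannZeta_ofReal_re_eq_tsum hγ1, hexp]
  exact ⟨hlim, tendsto_div_natCast_of_tendsto_div_rpow
    ((div_lt_one (by linarith)).2 (by linarith)) hlim⟩
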